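/- arXiv:1704.05707 — 2 statements merged into one kernel-verified Lean document; each statement's English description precedes it below -/
import Mathlib

section
/- Let {G_n}_{n≥1} be a sequence of random multigraphs, G_n on n nodes with degree sequence (D_1, …, D_n), satisfying: (i) there exist a probability mass function f on the nonnegative integers with size-biased version f^*(k) = k f(k)/(Σ_ℓ ℓ f(ℓ)) and constants α, ε > 0 such that P(max{d₁(f_n, f), d_tv(f_n^*, f^*)} > n^{-ε}) = O(n^{-α}); (ii) there exist a joint probability mass function h(k, ℓ) on the positive integers and κ > 0 such that P(Σ_{k,ℓ≥1} |h_n(k,ℓ) − h(k,ℓ)| 1{f_n(k) > 0} > n^{-κ}) → 0; (iii) Σ_k k^{1+η} f(k) < ∞ for some 0 < η < 1. Define Θ(k) = 1{f(k) > 0} (Σ_{ℓ≥1} h(k,ℓ) F^*(ℓ))/f^*(k), where F^* is the cdf of f^*. Then for each fixed k with f(k) > 0 and each 0 < δ < min{ε, η/(8+4η), κ}, lim_{n→∞} P(|Θ_n(k) − Θ(k)| > n^{-δ}) = 0. -/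
open MeasureTheory Filter
open scoped ENNReal NNReal BigOperators

namespace ANNDPaper

/-- A function is slowly varying if `l (λ x) / l x → 1` as `x → ∞` for every `λ > 0`. -/
def SlowlyVarying (l : ℝ → ℝ) : Prop :=
  ∀ lam : ℝ, 0 < lam → Tendsto (fun x => l (lam * x) / l x) atTop (nhds 1)

/-- A function is eventually monotone if it is monotone on some interval `[K, ∞)`. -/
def EventuallyMonotone (l : ℝ → ℝ) : Prop :=
  ∃ K : ℝ, MonotoneOn l (Set.Ici K) ∨ AntitoneOn l (Set.Ici K)

/-- Cumulative distribution function of a mass function on `ℕ`. -/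
noncomputable def cdfOf (f : ℕ → ℝ) (k : ℕ) : ℝ := ∑ j ∈ Finset.range (k + 1), f j

/-- Kantorovich–Rubinstein distance between two mass functions on `ℕ`,
valued in `ℝ≥0∞`. -/
noncomputable def d1 (f g : ℕ → ℝ) : ℝ≥0∞ :=
  ∑' k : ℕ, ENNReal.ofReal |cdfOf f k - cdfOf g k|

/-- Total variation distance between two mass functions on `ℕ`, valued in `ℝ≥0∞`. -/
noncomputable def dtv (f g : ℕ → ℝ) : ℝ≥0∞ :=
  (∑' k : ℕ, ENNReal.ofReal |f k - g k|) / 2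

/-- Mean of a mass function on `ℕ`. -/
noncomputable def meanPMF (f : ℕ → ℝ) : ℝ := ∑' k : ℕ, (k : ℝ) * f k

/-- Size-biased version `f^*(k) = k f(k) / E[f]` of a mass function on `ℕ`. -/
noncomputable def sizeBiased (f : ℕ → ℝ) (k : ℕ) : ℝ := (k : ℝ) * f k / meanPMF f

/-- `L_n`, the sum of the degrees. -/
def degSum {n : ℕ} (d : Fin n → ℕ) : ℕ := ∑ i, d i

/-- Empirical degree density `f_n(k)`. -/
noncomputable def empDens {n : ℕ} (d : Fin n → ℕ) (k : ℕ) : ℝ :=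
  (∑ i, if d i = k then (1 : ℝ) else 0) / (n : ℝ)

/-- Size-biased empirical degree density `f_n^*(k)`. -/
noncomputable def empSB {n : ℕ} (d : Fin n → ℕ) (k : ℕ) : ℝ :=
  (∑ i, if d i = k then (k : ℝ) else 0) / (degSum d : ℝ)

/-- Size-biased empirical cumulative distribution function `F_n^*(ℓ)`. -/
noncomputable def empSBcdf {n : ℕ} (d : Fin n → ℕ) (l : ℕ) : ℝ :=
  (∑ i, if d i ≤ l then (d i : ℝ) else 0) / (degSum d : ℝ)

/-- Empirical joint degree distribution `h_n(k, ℓ)` of a multigraph with degrees `d`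
and edge counts `g` (self-loops counted twice). -/
noncomputable def jointDens {n : ℕ} (d : Fin n → ℕ) (g : Fin n → Fin n → ℕ) (k l : ℕ) : ℝ :=
  (∑ i, ∑ j, if d i = k ∧ d j = l then (g i j : ℝ) else 0) / (degSum d : ℝ)

/-- Average nearest neighbor degree `Φ_n(k)`. -/
noncomputable def ANND {n : ℕ} (d : Fin n → ℕ) (g : Fin n → Fin n → ℕ) (k : ℕ) : ℝ :=
  if 0 < empDens d k then (∑' l : ℕ, jointDens d g k l * (l : ℝ)) / empSB d k else 0

/-- Average nearest neighbor rank `Θ_n(k)`. -/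
noncomputable def ANNR {n : ℕ} (d : Fin n → ℕ) (g : Fin n → Fin n → ℕ) (k : ℕ) : ℝ :=
  if 0 < empDens d k then (∑' l : ℕ, jointDens d g k l * empSBcdf d l) / empSB d k else 0

/-- The degree of node `i` in a multigraph with edge counts `g` (self-loops counted twice). -/
def degOf {n : ℕ} (g : Fin n → Fin n → ℕ) (i : Fin n) : ℕ := ∑ j, g i j

/-- Erased edge counts: self-loops removed, multiple edges merged. -/
def erase {n : ℕ} (g : Fin n → Fin n → ℕ) (i j : Fin n) : ℕ :=
  if i = j then 0 else min (g i j) 1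

/-- Degrees after erasure. -/
def eraseDeg {n : ℕ} (g : Fin n → Fin n → ℕ) (i : Fin n) : ℕ := ∑ j, erase g i j

/-- The stubs (half-edges) attached to the nodes, given a degree sequence `d`. -/
abbrev Stubs {n : ℕ} (d : Fin n → ℕ) : Type := (i : Fin n) × Fin (d i)

/-- A perfect matching of the stubs: a fixed-point-free involution. -/
def Matching {n : ℕ} (d : Fin n → ℕ) : Type :=
  {σ : Equiv.Perm (Stubs d) // ∀ s, σ s ≠ s ∧ σ (σ s) = s}

instance {n : ℕ} (d : Fin n → ℕ) : MeasurableSpace (Matching d) := ⊤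

/-- The uniform probability measure on perfect matchings of the stubs. -/
noncomputable def uniformMatching {n : ℕ} (d : Fin n → ℕ) : Measure (Matching d) :=
  (Nat.card (Matching d) : ℝ≥0∞)⁻¹ • Measure.count

/-- The edge counts `G_{ij}` of the configuration-model multigraph determined by a
matching of the stubs: the number of stubs of `i` matched to stubs of `j`
(self-loops are automatically counted twice). -/
def cmEdges {n : ℕ} (d : Fin n → ℕ) (σ : Matching d) (i j : Fin n) : ℕ :=
  (Finset.univ.filter (fun s : Fin (d i) => ((σ.1 ⟨i, s⟩).1 = j))).card

/-- Parity correction: add `1` to the last coordinate if the total sum is odd,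
making the total even. -/
def parityFix (n : ℕ) (x : Fin n → ℕ) (i : Fin n) : ℕ :=
  if (i : ℕ) = n - 1 ∧ (∑ j, x j) % 2 = 1 then x i + 1 else x i

/-- The law of the degree sequence `IID(𝒟)` of length `n`, where `ν` is the law of `𝒟`:
i.i.d. samples with the last one corrected for parity. -/
noncomputable def iidLaw (n : ℕ) (ν : Measure ℕ) : Measure (Fin n → ℕ) :=
  Measure.map (parityFix n) (Measure.pi fun _ : Fin n => ν)

/-- The joint law of (degree sequence, edge counts) in the configuration model of size `n`
with degree sequence `IID(𝒟)`, where `ν` is the law of `𝒟`: sample the degrees, then an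
independent uniform perfect matching of the stubs. -/
noncomputable def cmLaw (n : ℕ) (ν : Measure ℕ) :
    Measure ((Fin n → ℕ) × (Fin n → Fin n → ℕ)) :=
  (iidLaw n ν).bind fun d => (uniformMatching d).map fun σ => (d, cmEdges d σ)

/-! On the event where `d_tv(f_n^*, f^*) ≤ n^{-ε}` and the joint-distribution error is at
most `n^{-κ}`, the numerator `Σ_ℓ h_n(k,ℓ) F_n^*(ℓ)` and the denominator `f_n^*(k)` of
`Θ_n(k)` are within `O(n^{-κ} + n^{-ε})` of those of `Θ(k)`. Since `f^*(k) > 0`, the ratios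
differ by `O(n^{-κ} + n^{-ε}) = o(n^{-δ})`, so `|Θ_n(k) - Θ(k)| > n^{-δ}` eventually forces
one of the two bad events, whose probabilities vanish. For `k = 0` both `Θ_n(0)` and `Θ(0)` are
divisions by `f_n^*(0) = f^*(0) = 0`, hence `0`. -/

/-- `Θ(k)`. -/
noncomputable def limitANNR (f : ℕ → ℝ) (h : ℕ → ℕ → ℝ) (k : ℕ) : ℝ :=
  if 0 < f k then (∑' l : ℕ, h k l * cdfOf (sizeBiased f) l) / sizeBiased f k else 0

/-- The distance `Σ_{k,ℓ} |h_n(k,ℓ) - h(k,ℓ)| 1{f_n(k) > 0}` of Assumption 2. -/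
noncomputable def jointDensDist {n : ℕ} (d : Fin n → ℕ) (g : Fin n → Fin n → ℕ)
    (h : ℕ → ℕ → ℝ) : ℝ :=
  ∑' k : ℕ, ∑' l : ℕ, (if 0 < empDens d k then |jointDens d g k l - h k l| else 0)

lemma abs_div_sub_div_le {a b a' b' e : ℝ} (hb : 0 < b) (hb' : b / 2 ≤ b')
    (ha0 : 0 ≤ a) (ha1 : a ≤ 1) (ha' : |a' - a| ≤ e) (hb'e : |b' - b| ≤ e) :
    |a' / b' - a / b| ≤ 2 * (1 / b + 1 / b ^ 2) * e := by
  have hb'0 : 0 < b' := by linarith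
  have hnum : |(a' - a) * b + a * (b - b')| ≤ e * b + e := by
    calc |(a' - a) * b + a * (b - b')|
        ≤ |a' - a| * b + a * |b' - b| := by
          refine (abs_add_le _ _).trans_eq ?_
          rw [abs_mul, abs_mul, abs_of_pos hb, abs_of_nonneg ha0, abs_sub_comm b b']
      _ ≤ e * b + e := by nlinarith [abs_nonneg (b' - b)]
  have hsplit : a' / b' - a / b = ((a' - a) * b + a * (b - b')) / (b' * b) := by
    field_simp
    ring
  calc |a' / b' - a / b| = |(a' - a) * b + a * (b - b')| / (b' * b) := by
        rw [hsplit, abs_div, abs_of_pos (mul_pos hb'0 hb)]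
    _ ≤ (e * b + e) / (b / 2 * b) := by
        gcongr
        · nlinarith [abs_nonneg (b' - b)]
    _ = 2 * (1 / b + 1 / b ^ 2) * e := by field_simp

lemma sum_abs_sub_le_of_dtv_le {p q : ℕ → ℝ} {c : ℝ} (hc : 0 ≤ c)
    (hd : dtv p q ≤ ENNReal.ofReal c) (s : Finset ℕ) :
    ∑ j ∈ s, |p j - q j| ≤ 2 * c := by
  have htsum : ∑' j, ENNReal.ofReal |p j - q j| ≤ ENNReal.ofReal (2 * c) := by
    rw [ENNReal.ofReal_mul zero_le_two, ENNReal.ofReal_ofNat, mul_comm]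
    exact (ENNReal.div_le_iff_le_mul (Or.inl two_ne_zero) (Or.inl ENNReal.ofNat_ne_top)).1 hd
  rw [← ENNReal.ofReal_le_ofReal_iff (by positivity),
    ENNReal.ofReal_sum_of_nonneg fun j _ => abs_nonneg _]
  exact (ENNReal.sum_le_tsum s).trans htsum

lemma abs_sub_le_of_dtv_le {p q : ℕ → ℝ} {c : ℝ} (hc : 0 ≤ c)
    (hd : dtv p q ≤ ENNReal.ofReal c) (k : ℕ) : |p k - q k| ≤ 2 * c := by
  simpa using sum_abs_sub_le_of_dtv_le hc hd {k}

lemma abs_cdfOf_sub_le_of_dtv_le {p q : ℕ → ℝ} {c : ℝ} (hc : 0 ≤ c)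
    (hd : dtv p q ≤ ENNReal.ofReal c) (l : ℕ) : |cdfOf p l - cdfOf q l| ≤ 2 * c := by
  rw [cdfOf, cdfOf, ← Finset.sum_sub_distrib]
  exact (Finset.abs_sum_le_sum_abs _ _).trans (sum_abs_sub_le_of_dtv_le hc hd _)

lemma cdfOf_nonneg {p : ℕ → ℝ} (hp : ∀ j, 0 ≤ p j) (l : ℕ) : 0 ≤ cdfOf p l :=
  Finset.sum_nonneg fun j _ => hp j

lemma cdfOf_le_one {p : ℕ → ℝ} (hp : ∀ j, 0 ≤ p j) (hp1 : HasSum p 1) (l : ℕ) :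
    cdfOf p l ≤ 1 :=
  sum_le_hasSum _ (fun j _ => hp j) hp1

lemma abs_tsum_mul_sub_tsum_mul_le {p q u v : ℕ → ℝ} {e : ℝ} (hp : Summable p)
    (hq : Summable q) (hq0 : ∀ l, 0 ≤ q l) (hq1 : ∑' l, q l ≤ 1)
    (hu0 : ∀ l, 0 ≤ u l) (hu1 : ∀ l, u l ≤ 1) (huv : ∀ l, |u l - v l| ≤ e) :
    |∑' l, p l * u l - ∑' l, q l * v l| ≤ ∑' l, |p l - q l| + e := by
  have he : 0 ≤ e := (abs_nonneg _).trans (huv 0)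
  have hpu : Summable fun l => p l * u l :=
    hp.abs.of_norm_bounded fun l => by
      rw [Real.norm_eq_abs, abs_mul, abs_of_nonneg (hu0 l)]
      exact mul_le_of_le_one_right (abs_nonneg _) (hu1 l)
  have hqv : Summable fun l => q l * v l :=
    (hq.mul_right (1 + e)).of_norm_bounded fun l => by
      rw [Real.norm_eq_abs, abs_mul, abs_of_nonneg (hq0 l)]
      refine mul_le_mul_of_nonneg_left ?_ (hq0 l)
      have := abs_sub_abs_le_abs_sub (v l) (u l)
      rw [abs_sub_comm] at this
      linarith [huv l, abs_of_nonneg (hu0 l), hu1 l]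
  have hpq : Summable fun l => |p l - q l| := (hp.sub hq).abs
  have hpointwise : ∀ l, |p l * u l - q l * v l| ≤ |p l - q l| + q l * e := fun l => by
    calc |p l * u l - q l * v l| = |(p l - q l) * u l + q l * (u l - v l)| := by ring_nf
      _ ≤ |p l - q l| * u l + q l * |u l - v l| := by
          refine (abs_add_le _ _).trans_eq ?_
          rw [abs_mul, abs_mul, abs_of_nonneg (hu0 l), abs_of_nonneg (hq0 l)]
      _ ≤ |p l - q l| + q l * e := by
          gcongr
          · exact mul_le_of_le_one_right (abs_nonneg _) (hu1 l)
          · exact hq0 l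
          · exact huv l
  calc |∑' l, p l * u l - ∑' l, q l * v l| = |∑' l, (p l * u l - q l * v l)| := by
        rw [hpu.tsum_sub hqv]
    _ ≤ ∑' l, |p l * u l - q l * v l| := by
        simpa only [Real.norm_eq_abs] using norm_tsum_le_tsum_norm (hpu.sub hqv).norm
    _ ≤ ∑' l, (|p l - q l| + q l * e) :=
        (hpu.sub hqv).abs.tsum_le_tsum hpointwise (hpq.add (hq.mul_right e))
    _ = ∑' l, |p l - q l| + (∑' l, q l) * e := by
        rw [hpq.tsum_add (hq.mul_right e), tsum_mul_right]
    _ ≤ ∑' l, |p l - q l| + e := by nlinarith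

section Empirical

variable {n : ℕ} (d : Fin n → ℕ) (g : Fin n → Fin n → ℕ)

lemma empDens_pos_of_empSB_pos {k : ℕ} (hk : 0 < empSB d k) : 0 < empDens d k := by
  obtain ⟨i, hi⟩ : ∃ i, d i = k := by
    by_contra! hne
    simp [empSB, hne] at hk
  have hn : (0 : ℝ) < n := by exact_mod_cast i.pos
  refine div_pos ?_ hn
  calc (0 : ℝ) < 1 := one_pos
    _ ≤ ∑ j, if d j = k then (1 : ℝ) else 0 :=
        le_of_eq_of_le (by simp [hi]) <| Finset.single_le_sum
          (f := fun j => if d j = k then (1 : ℝ) else 0)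
          (fun j _ => by positivity) (Finset.mem_univ i)

lemma empSB_zero : empSB d 0 = 0 := by
  simp [empSB]

lemma empSBcdf_eq_cdfOf (l : ℕ) : empSBcdf d l = cdfOf (empSB d) l := by
  unfold empSBcdf empSB cdfOf
  rw [← Finset.sum_div, Finset.sum_comm]
  congr 1
  refine Finset.sum_congr rfl fun i _ => ?_
  rw [Finset.sum_ite_eq (Finset.range (l + 1)) (d i) (fun j => (j : ℝ))]
  simp

lemma empSBcdf_nonneg (l : ℕ) : 0 ≤ empSBcdf d l := by
  unfold empSBcdf
  positivity

lemma empSBcdf_le_one (l : ℕ) : empSBcdf d l ≤ 1 := by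
  unfold empSBcdf
  refine div_le_one_of_le₀ ?_ (Nat.cast_nonneg _)
  calc (∑ i, if d i ≤ l then (d i : ℝ) else 0) ≤ ∑ i, (d i : ℝ) :=
        Finset.sum_le_sum fun i _ => by split_ifs <;> simp
    _ = degSum d := by simp [degSum]

lemma jointDens_eq_zero_of_notMem {k l : ℕ} (hl : l ∉ Finset.univ.image d) :
    jointDens d g k l = 0 := by
  refine div_eq_zero_iff.2 <| Or.inl <|
    Finset.sum_eq_zero fun i _ => Finset.sum_eq_zero fun j _ => ?_
  rw [if_neg]
  rintro ⟨-, rfl⟩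
  exact hl (Finset.mem_image_of_mem d (Finset.mem_univ j))

lemma summable_jointDens (k : ℕ) : Summable (jointDens d g k) :=
  summable_of_ne_finset_zero fun _ hl => jointDens_eq_zero_of_notMem d g hl

lemma ANNR_zero : ANNR d g 0 = 0 := by
  simp [ANNR, empSB_zero]

lemma jointDensDist_nonneg (h : ℕ → ℕ → ℝ) : 0 ≤ jointDensDist d g h :=
  tsum_nonneg fun _ => tsum_nonneg fun _ => by split_ifs <;> simp

lemma tsum_abs_jointDens_sub_le_jointDensDist (h : ℕ → ℕ → ℝ) {k : ℕ}
    (hk : 0 < empDens d k) :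
    ∑' l, |jointDens d g k l - h k l| ≤ jointDensDist d g h := by
  have hsupp : ∀ k' ∉ Finset.univ.image d,
      (∑' l, if 0 < empDens d k' then |jointDens d g k' l - h k' l| else 0) = 0 := by
    intro k' hk'
    have : ¬ 0 < empDens d k' := fun hpos => by
      simp_all [empDens]
    simp [this]
  have hle := (show Summable _ from summable_of_ne_finset_zero hsupp).le_tsum k fun k' _ =>
    tsum_nonneg fun l => by split_ifs <;> simp
  simp only [hk, if_true] at hle
  exact hle

end Empirical

lemma sizeBiased_zero (f : ℕ → ℝ) : sizeBiased f 0 = 0 := by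
  simp [sizeBiased]

lemma limitANNR_zero (f : ℕ → ℝ) (h : ℕ → ℕ → ℝ) : limitANNR f h 0 = 0 := by
  simp [limitANNR, sizeBiased_zero]

lemma summable_mul_of_summable_rpow_mul {f : ℕ → ℝ} (hf0 : ∀ k, 0 ≤ f k) {η : ℝ}
    (hη : 0 ≤ η) (hmom : Summable fun k : ℕ => (k : ℝ) ^ (1 + η) * f k) :
    Summable fun k : ℕ => (k : ℝ) * f k := by
  refine Summable.of_nonneg_of_le (fun k => mul_nonneg k.cast_nonneg (hf0 k)) (fun k => ?_) hmom
  refine mul_le_mul_of_nonneg_right ?_ (hf0 k)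
  rcases k.eq_zero_or_pos with rfl | hk
  · simp [Real.rpow_nonneg]
  · exact Real.self_le_rpow_of_one_le (by exact_mod_cast hk) (by linarith)

lemma sizeBiased_nonneg {f : ℕ → ℝ} (hf0 : ∀ k, 0 ≤ f k) (k : ℕ) :
    0 ≤ sizeBiased f k :=
  div_nonneg (mul_nonneg k.cast_nonneg (hf0 k))
    (tsum_nonneg fun j => mul_nonneg j.cast_nonneg (hf0 j))

lemma meanPMF_pos {f : ℕ → ℝ} (hf0 : ∀ k, 0 ≤ f k)
    (hmean : Summable fun k : ℕ => (k : ℝ) * f k) {k : ℕ} (hk0 : 0 < k) (hk : 0 < f k) :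
    0 < meanPMF f :=
  (mul_pos (by exact_mod_cast hk0) hk).trans_le <|
    hmean.le_tsum k fun j _ => mul_nonneg j.cast_nonneg (hf0 j)

lemma sizeBiased_pos {f : ℕ → ℝ} (hm : 0 < meanPMF f) {k : ℕ} (hk0 : 0 < k) (hk : 0 < f k) :
    0 < sizeBiased f k :=
  div_pos (mul_pos (by exact_mod_cast hk0) hk) hm

lemma hasSum_sizeBiased {f : ℕ → ℝ} (hmean : Summable fun k : ℕ => (k : ℝ) * f k)
    (hm : 0 < meanPMF f) : HasSum (sizeBiased f) 1 := by
  have := hmean.hasSum.div_const (meanPMF f)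
  rwa [← meanPMF, div_self hm.ne'] at this

lemma tsum_le_of_hasSum_uncurry {h : ℕ → ℕ → ℝ} (hh0 : ∀ k l, 0 ≤ h k l) {a : ℝ}
    (hh : HasSum (fun p : ℕ × ℕ => h p.1 p.2) a) (k : ℕ) : ∑' l, h k l ≤ a :=
  le_hasSum (hh.prod_fiberwise fun k => (hh.summable.prod_factor k).hasSum) k
    fun j _ => tsum_nonneg (hh0 j)

theorem abs_ANNR_sub_limitANNR_le {n : ℕ} (d : Fin n → ℕ) (g : Fin n → Fin n → ℕ)
    {f : ℕ → ℝ} (hF0 : ∀ j, 0 ≤ sizeBiased f j) (hF1 : HasSum (sizeBiased f) 1)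
    {h : ℕ → ℕ → ℝ} {k : ℕ} (hh0 : ∀ l, 0 ≤ h k l) (hrow : Summable (h k))
    (hrow1 : ∑' l, h k l ≤ 1) (hk : 0 < f k) {c γ : ℝ} (hc : 0 ≤ c)
    (hcb : 4 * c ≤ sizeBiased f k) (hdtv : dtv (empSB d) (sizeBiased f) ≤ ENNReal.ofReal c)
    (hΓ : jointDensDist d g h ≤ γ) (hb : 0 < sizeBiased f k) :
    |ANNR d g k - limitANNR f h k| ≤
      2 * (1 / sizeBiased f k + 1 / sizeBiased f k ^ 2) * (γ + 2 * c) := by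
  have hγ : 0 ≤ γ := (jointDensDist_nonneg d g h).trans hΓ
  have hden := abs_sub_le_of_dtv_le hc hdtv k
  have hden_half : sizeBiased f k / 2 ≤ empSB d k := by
    linarith [(abs_le.1 hden).1]
  have hempDens : 0 < empDens d k := empDens_pos_of_empSB_pos d (by linarith)
  have hnum : |∑' l, jointDens d g k l * empSBcdf d l - ∑' l, h k l * cdfOf (sizeBiased f) l|
      ≤ γ + 2 * c := by
    refine (abs_tsum_mul_sub_tsum_mul_le (e := 2 * c) (summable_jointDens d g k) hrow hh0 hrow1
      (empSBcdf_nonneg d) (empSBcdf_le_one d) fun l => ?_).trans ?_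
    · rw [empSBcdf_eq_cdfOf]
      exact abs_cdfOf_sub_le_of_dtv_le hc hdtv l
    · linarith [tsum_abs_jointDens_sub_le_jointDensDist d g h hempDens]
  have hterm0 : ∀ l, 0 ≤ h k l * cdfOf (sizeBiased f) l :=
    fun l => mul_nonneg (hh0 l) (cdfOf_nonneg hF0 l)
  have hterm1 : ∀ l, h k l * cdfOf (sizeBiased f) l ≤ h k l :=
    fun l => mul_le_of_le_one_right (hh0 l) (cdfOf_le_one hF0 hF1 l)
  have hlim0 : 0 ≤ ∑' l, h k l * cdfOf (sizeBiased f) l := tsum_nonneg hterm0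
  have hlim1 : ∑' l, h k l * cdfOf (sizeBiased f) l ≤ 1 :=
    ((hrow.of_nonneg_of_le hterm0 hterm1).tsum_le_tsum hterm1 hrow).trans hrow1
  rw [ANNR, if_pos hempDens, limitANNR, if_pos hk]
  exact abs_div_sub_div_le hb hden_half hlim0 hlim1 hnum (hden.trans (by linarith))

lemma eventually_mul_rpow_neg_add_le {δ κ ε : ℝ} (hκ : δ < κ) (hε : δ < ε) (A B : ℝ) :
    ∀ᶠ x : ℝ in atTop, A * x ^ (-κ) + B * x ^ (-ε) ≤ x ^ (-δ) := by
  have hlim : Tendsto (fun x : ℝ => A * x ^ (-(κ - δ)) + B * x ^ (-(ε - δ)))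
      atTop (nhds 0) := by
    simpa using ((tendsto_rpow_neg_atTop (sub_pos.2 hκ)).const_mul A).add
      ((tendsto_rpow_neg_atTop (sub_pos.2 hε)).const_mul B)
  filter_upwards [hlim.eventually (ge_mem_nhds one_pos), eventually_gt_atTop 0] with x hx hx0
  have hsplit : ∀ a, x ^ (-a) = x ^ (-(a - δ)) * x ^ (-δ) := fun a => by
    rw [← Real.rpow_add hx0]
    ring_nf
  rw [hsplit κ, hsplit ε]
  nlinarith [Real.rpow_nonneg hx0.le (-δ)]

lemma tendsto_measureReal_of_eventually_subset_union {ι Ω : Type*} [MeasurableSpace Ω]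
    {μ : Measure Ω} [IsFiniteMeasure μ] {l : Filter ι} {s t u : ι → Set Ω}
    (hsub : ∀ᶠ i in l, s i ⊆ t i ∪ u i) (ht : Tendsto (fun i => μ.real (t i)) l (nhds 0))
    (hu : Tendsto (fun i => μ.real (u i)) l (nhds 0)) :
    Tendsto (fun i => μ.real (s i)) l (nhds 0) := by
  refine squeeze_zero' (Eventually.of_forall fun i => measureReal_nonneg)
    (hsub.mono fun i hi => (measureReal_mono hi).trans (measureReal_union_le _ _)) ?_
  simpa using ht.add hu

theorem stmt10_general
    {Ω : Type*} [MeasurableSpace Ω] (μ : Measure Ω) [IsProbabilityMeasure μ]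
    (D : (n : ℕ) → Ω → Fin n → ℕ) (G : (n : ℕ) → Ω → Fin n → Fin n → ℕ)
    -- the limiting degree distribution
    (f : ℕ → ℝ) (hf0 : ∀ k, 0 ≤ f k)
    -- Assumption 3 (regularity of the degrees, with total variation for `f^*`)
    (α ε : ℝ) (hα : 0 < α) (hε : 0 < ε)
    (hOmega : (fun n : ℕ =>
        (μ {ω | ENNReal.ofReal ((n : ℝ) ^ (-ε)) <
            max (d1 (empDens (D n ω)) f)
              (dtv (empSB (D n ω)) (sizeBiased f))}).toReal)
      =O[atTop] fun n : ℕ => (n : ℝ) ^ (-α))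
    -- Assumption 2 (regularity of the joint distribution)
    (h : ℕ → ℕ → ℝ) (hh0 : ∀ k l, 0 ≤ h k l)
    (hh1 : HasSum (fun p : ℕ × ℕ => h p.1 p.2) 1)
    (κ : ℝ)
    (hGamma : Tendsto (fun n : ℕ =>
        (μ {ω | (n : ℝ) ^ (-κ) <
            ∑' k : ℕ, ∑' l : ℕ,
              (if 0 < empDens (D n ω) k then
                |jointDens (D n ω) (G n ω) k l - h k l| else 0)}).toReal)
      atTop (nhds 0))
    -- finite (1+η)-moment of the limit distribution
    (η : ℝ) (hη0 : 0 < η)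
    (hmom : Summable fun k : ℕ => (k : ℝ) ^ (1 + η) * f k)
    -- conclusion
    (k : ℕ) (hk : 0 < f k)
    (δ : ℝ) (hδ : δ < min ε (min (η / (8 + 4 * η)) κ)) :
    Tendsto (fun n : ℕ =>
        (μ {ω | (n : ℝ) ^ (-δ) <
            |ANNR (D n ω) (G n ω) k -
              (if 0 < f k then
                (∑' l : ℕ, h k l * cdfOf (sizeBiased f) l) / sizeBiased f k
              else 0)|}).toReal)
      atTop (nhds 0) := by
  refine tendsto_measureReal_of_eventually_subset_union
    (s := fun n : ℕ => {ω | (n : ℝ) ^ (-δ) < |ANNR (D n ω) (G n ω) k - limitANNR f h k|}) ?_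
    (hOmega.trans_tendsto ((tendsto_rpow_neg_atTop hα).comp tendsto_natCast_atTop_atTop))
    hGamma
  obtain rfl | hk0 := k.eq_zero_or_pos
  · refine Eventually.of_forall fun n ω hω => absurd hω ?_
    simp [ANNR_zero, limitANNR_zero, Real.rpow_nonneg]
  have hmean := summable_mul_of_summable_rpow_mul hf0 hη0.le hmom
  have hm := meanPMF_pos hf0 hmean hk0 hk
  set b := sizeBiased f k
  have hb : 0 < b := sizeBiased_pos hm hk0 hk
  rw [lt_min_iff, lt_min_iff] at hδ
  obtain ⟨hδε, -, hδκ⟩ := hδ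
  have hev : ∀ᶠ n : ℕ in atTop, 4 * (n : ℝ) ^ (-ε) ≤ b ∧
      2 * (1 / b + 1 / b ^ 2) * (n : ℝ) ^ (-κ) + 4 * (1 / b + 1 / b ^ 2) * (n : ℝ) ^ (-ε)
        ≤ (n : ℝ) ^ (-δ) :=
    tendsto_natCast_atTop_atTop.eventually <|
      (((tendsto_rpow_neg_atTop hε).const_mul 4).eventually
        (ge_mem_nhds (by simpa using hb))).and (eventually_mul_rpow_neg_add_le hδκ hδε _ _)
  filter_upwards [hev] with n ⟨hcb, herr⟩ ω hω
  by_contra! hgood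
  simp only [Set.mem_union, Set.mem_ofPred_eq, not_or, not_lt] at hgood
  have hbound := abs_ANNR_sub_limitANNR_le (D n ω) (G n ω) (sizeBiased_nonneg hf0)
    (hasSum_sizeBiased hmean hm) (hh0 k) (hh1.summable.prod_factor k)
    (tsum_le_of_hasSum_uncurry hh0 hh1 k) hk (by positivity) hcb
    ((le_max_right _ _).trans hgood.1) hgood.2 hb
  exact hω.not_ge (hbound.trans (le_of_eq_of_le (by ring) herr))

/-- General convergence of the ANNR: for a sequence of random multigraphs
satisfying the degree regularity assumption (with total variation for the size-biased
density), the joint-distribution regularity assumption, and a finite `(1+η)`-moment of the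
limiting degree distribution, `P(|Θ_n(k) − Θ(k)| > n^{-δ}) → 0` for every fixed `k` with
`f(k) > 0` and every `0 < δ < min{ε, η/(8+4η), κ}`. -/
theorem stmt10
    {Ω : Type*} [MeasurableSpace Ω] (μ : Measure Ω) [IsProbabilityMeasure μ]
    (D : (n : ℕ) → Ω → Fin n → ℕ) (G : (n : ℕ) → Ω → Fin n → Fin n → ℕ)
    (hsym : ∀ n ω i j, G n ω i j = G n ω j i)
    (hdiag : ∀ n ω i, Even (G n ω i i))
    (hdeg : ∀ n ω i, degOf (G n ω) i = D n ω i)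
    -- the limiting degree distribution
    (f : ℕ → ℝ) (hf0 : ∀ k, 0 ≤ f k) (hf1 : HasSum f 1)
    -- Assumption 3 (regularity of the degrees, with total variation for `f^*`)
    (α ε : ℝ) (hα : 0 < α) (hε : 0 < ε)
    (hOmega : (fun n : ℕ =>
        (μ {ω | ENNReal.ofReal ((n : ℝ) ^ (-ε)) <
            max (d1 (empDens (D n ω)) f)
              (dtv (empSB (D n ω)) (sizeBiased f))}).toReal)
      =O[atTop] fun n : ℕ => (n : ℝ) ^ (-α))
    -- Assumption 2 (regularity of the joint distribution)
    (h : ℕ → ℕ → ℝ) (hh0 : ∀ k l, 0 ≤ h k l)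
    (hh1 : HasSum (fun p : ℕ × ℕ => h p.1 p.2) 1)
    (hhsupp : ∀ k, h k 0 = 0 ∧ h 0 k = 0)
    (κ : ℝ) (hκ : 0 < κ)
    (hGamma : Tendsto (fun n : ℕ =>
        (μ {ω | (n : ℝ) ^ (-κ) <
            ∑' k : ℕ, ∑' l : ℕ,
              (if 0 < empDens (D n ω) k then
                |jointDens (D n ω) (G n ω) k l - h k l| else 0)}).toReal)
      atTop (nhds 0))
    -- finite (1+η)-moment of the limit distribution
    (η : ℝ) (hη0 : 0 < η) (hη1 : η < 1)
    (hmom : Summable fun k : ℕ => (k : ℝ) ^ (1 + η) * f k)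
    -- conclusion
    (k : ℕ) (hk : 0 < f k)
    (δ : ℝ) (hδ0 : 0 < δ) (hδ : δ < min ε (min (η / (8 + 4 * η)) κ)) :
    Tendsto (fun n : ℕ =>
        (μ {ω | (n : ℝ) ^ (-δ) <
            |ANNR (D n ω) (G n ω) k -
              (if 0 < f k then
                (∑' l : ℕ, h k l * cdfOf (sizeBiased f) l) / sizeBiased f k
              else 0)|}).toReal)
      atTop (nhds 0) :=
  stmt10_general μ D G f hf0 α ε hα hε hOmega h hh0 hh1 κ hGamma η hη0 hmom k hk δ hδ

end ANNDPaper
end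

section
/- Let G be any multigraph on n nodes with degrees D_1, …, D_n and L_n = Σ_i D_i, let Ĝ be its erased version with degrees D̂_1, …, D̂_n, erased stubs Y_i = D_i − D̂_i, E_n = Σ_i Y_i, and L̂_n = L_n − E_n, and assume L̂_n > 0. Define F_n^*(ℓ) = (1/L_n) Σ_i D_i 1{D_i ≤ ℓ} and F̂_n^*(ℓ) = (1/L̂_n) Σ_i D̂_i 1{D̂_i ≤ ℓ}. Then for every node j, |F̂_n^*(D̂_j) − F_n^*(D_j)| ≤ 2E_n/L_n + 2 F_n^*(D_j) 1{Y_j > 0} + (2/L_n) Σ_{i=1}^n D_i 1{Y_i > 0}. -/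
open MeasureTheory Filter
open scoped ENNReal NNReal BigOperators

namespace ANNDPaper

/-- For any multigraph on `n` nodes with edge counts `g` (symmetric,
self-loops counted twice) and its erased version with `L̂_n > 0`, for every node `j`:
`|F̂_n^*(D̂_j) − F_n^*(D_j)| ≤ 2E_n/L_n + 2 F_n^*(D_j) 1{Y_j > 0} + (2/L_n) Σ_i D_i 1{Y_i > 0}`. -/
theorem stmt19 {n : ℕ} (g : Fin n → Fin n → ℕ)
    (hsym : ∀ i j, g i j = g j i) (hdiag : ∀ i, Even (g i i))
    (hL : 0 < degSum (eraseDeg g)) (j : Fin n) :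
    |empSBcdf (eraseDeg g) (eraseDeg g j) - empSBcdf (degOf g) (degOf g j)| ≤
      2 * (∑ i, ((degOf g i : ℝ) - (eraseDeg g i : ℝ))) / (degSum (degOf g) : ℝ) +
        2 * empSBcdf (degOf g) (degOf g j) *
          (if eraseDeg g j < degOf g j then 1 else 0) +
        (2 / (degSum (degOf g) : ℝ)) *
          ∑ i, (if eraseDeg g i < degOf g i then (degOf g i : ℝ) else 0) := by
  classical
  have hle : ∀ i, eraseDeg g i ≤ degOf g i := by
    intro i
    unfold eraseDeg degOf erase
    refine Finset.sum_le_sum fun k _ => ?_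
    split
    · exact Nat.zero_le _
    · exact min_le_left _ _
  have hLhL : degSum (eraseDeg g) ≤ degSum (degOf g) :=
    Finset.sum_le_sum fun i _ => hle i
  set L : ℝ := (degSum (degOf g) : ℝ) with hLdef
  set Lh : ℝ := (degSum (eraseDeg g) : ℝ) with hLhdef
  have hLh0 : (0:ℝ) < Lh := by rw [hLhdef]; exact_mod_cast hL
  have hLhL' : Lh ≤ L := by rw [hLhdef, hLdef]; exact_mod_cast hLhL
  have hL0 : (0:ℝ) < L := lt_of_lt_of_le hLh0 hLhL'
  set a : ℝ := ∑ i, if eraseDeg g i ≤ eraseDeg g j then ((eraseDeg g i : ℝ)) else 0 with ha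
  set b : ℝ := ∑ i, if degOf g i ≤ degOf g j then ((degOf g i : ℝ)) else 0 with hb
  set S : ℝ := ∑ i, (if eraseDeg g i < degOf g i then (degOf g i : ℝ) else 0) with hS
  have hgoal1 : empSBcdf (eraseDeg g) (eraseDeg g j) = a / Lh := rfl
  have hgoal2 : empSBcdf (degOf g) (degOf g j) = b / L := rfl
  have hE : (∑ i, ((degOf g i : ℝ) - (eraseDeg g i : ℝ))) = L - Lh := by
    rw [Finset.sum_sub_distrib, hLdef, hLhdef]
    unfold degSum
    push_cast
    ring
  rw [hgoal1, hgoal2, hE]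
  -- basic facts
  have hb_nonneg : 0 ≤ b := Finset.sum_nonneg fun i _ => by positivity
  have hS_nonneg : 0 ≤ S := Finset.sum_nonneg fun i _ => by positivity
  have hLhsum : Lh = ∑ i, ((eraseDeg g i : ℝ)) := by
    rw [hLhdef]; unfold degSum; push_cast; rfl
  have ha_nonneg : 0 ≤ a := Finset.sum_nonneg fun i _ => by positivity
  have ha_le : a ≤ Lh := by
    rw [hLhsum]
    refine Finset.sum_le_sum fun i _ => ?_
    split <;> [exact le_rfl; positivity]
  have hEnn : 0 ≤ L - Lh := by linarith [hLhL']
  -- key pointwise bound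
  have hkey : |a - b| ≤ S + (if eraseDeg g j < degOf g j then (1:ℝ) else 0) * b := by
    rw [ha, hb, hS, ← Finset.sum_sub_distrib]
    refine le_trans (Finset.abs_sum_le_sum_abs _ _) ?_
    rw [Finset.mul_sum, ← Finset.sum_add_distrib]
    refine Finset.sum_le_sum fun i _ => ?_
    have hlei := hle i
    have hlej := hle j
    have hci : ((eraseDeg g i : ℕ) : ℝ) ≤ ((degOf g i : ℕ) : ℝ) := by exact_mod_cast hlei
    have h0i : (0:ℝ) ≤ ((eraseDeg g i : ℕ) : ℝ) := by positivity
    have h0i' : (0:ℝ) ≤ ((degOf g i : ℕ) : ℝ) := by positivity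
    rw [abs_le]
    constructor <;> split_ifs <;>
      first
        | linarith
        | (exfalso; omega)
        | (have hnn : eraseDeg g i = degOf g i := by omega
           have hrr : ((eraseDeg g i : ℕ) : ℝ) = ((degOf g i : ℕ) : ℝ) := by
             exact_mod_cast hnn
           linarith)
  -- main decomposition
  have hdecomp : a / Lh - b / L = a * (L - Lh) / (Lh * L) + (a - b) / L := by
    field_simp
    ring
  have h1 : a * (L - Lh) / (Lh * L) ≤ (L - Lh) / L := by
    rw [div_le_div_iff₀ (mul_pos hLh0 hL0) hL0]
    calc a * (L - Lh) * L ≤ Lh * (L - Lh) * L :=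
          mul_le_mul_of_nonneg_right (mul_le_mul_of_nonneg_right ha_le hEnn) hL0.le
      _ = (L - Lh) * (Lh * L) := by ring
  have h1' : 0 ≤ a * (L - Lh) / (Lh * L) :=
    div_nonneg (mul_nonneg ha_nonneg hEnn) (mul_pos hLh0 hL0).le
  have h2 : |(a - b) / L| ≤ (S + (if eraseDeg g j < degOf g j then (1:ℝ) else 0) * b) / L := by
    rw [abs_div, abs_of_pos hL0]
    exact div_le_div_of_nonneg_right hkey hL0.le
  calc |a / Lh - b / L| ≤ |a * (L - Lh) / (Lh * L)| + |(a - b) / L| := by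
        rw [hdecomp]; exact abs_add_le _ _
    _ ≤ (L - Lh) / L + (S + (if eraseDeg g j < degOf g j then (1:ℝ) else 0) * b) / L := by
        rw [abs_of_nonneg h1']
        exact add_le_add h1 h2
    _ ≤ 2 * (L - Lh) / L + 2 * (b / L) * (if eraseDeg g j < degOf g j then (1:ℝ) else 0)
          + (2 / L) * S := by
        by_cases hyj : eraseDeg g j < degOf g j
        · simp only [if_pos hyj]
          calc (L - Lh) / L + (S + 1 * b) / L = ((L - Lh) + (S + b)) / L := by ring
            _ ≤ (2 * (L - Lh) + 2 * b + 2 * S) / L := by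
                apply div_le_div_of_nonneg_right ?_ hL0.le
                linarith
            _ = 2 * (L - Lh) / L + 2 * (b / L) * 1 + (2 / L) * S := by ring
        · simp only [if_neg hyj]
          calc (L - Lh) / L + (S + 0 * b) / L = ((L - Lh) + S) / L := by ring
            _ ≤ (2 * (L - Lh) + 2 * S) / L := by
                apply div_le_div_of_nonneg_right ?_ hL0.le
                linarith
            _ = 2 * (L - Lh) / L + 2 * (b / L) * 0 + (2 / L) * S := by ring

end ANNDPaper
end
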